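/- Let X, Y be Banach spaces and T : Y → X a bounded linear operator. Suppose that for every Lipschitz function f : X → ℝ which is Gâteaux differentiable at 0 ∈ X, the composition f ∘ T is Fréchet differentiable at 0 ∈ Y. Then for every Banach space Z and every Lipschitz function f : X → Z which is Gâteaux differentiable at 0, the composition f ∘ T is Fréchet differentiable at 0. -/
import Mathlib


open Filter Metric Topology

section Defs
variable {X Z : Type*} [NormedAddCommGroup X] [NormedSpace ℝ X]
  [NormedAddCommGroup Z] [NormedSpace ℝ Z]

/-- `A` is the Gâteaux derivative of `f` at `x`: for every direction `h`,
`(f (x + t h) - f x)/t → A h` as `t → 0`, `t ≠ 0`. -/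
def HasGateauxDerivAt (f : X → Z) (A : X →L[ℝ] Z) (x : X) : Prop :=
  ∀ h : X, Tendsto (fun t : ℝ => t⁻¹ • (f (x + t • h) - f x)) (𝓝[≠] (0 : ℝ)) (𝓝 (A h))

/-- `f` is Gâteaux differentiable at `x`. -/
def GateauxDifferentiableAt (f : X → Z) (x : X) : Prop :=
  ∃ A : X →L[ℝ] Z, HasGateauxDerivAt f A x

/-- `f` is locally Lipschitz on `U`: every point of `U` has a neighborhood on
which `f` is Lipschitz (relative to `U`). -/
def LocallyLipschitzOnSet (f : X → Z) (U : Set X) : Prop :=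
  ∀ u ∈ U, ∃ (K : NNReal) (r : ℝ), 0 < r ∧ LipschitzOnWith K f (U ∩ ball u r)
end Defs

/-- Let `X`, `Y` be Banach spaces and `T : Y → X` a bounded linear
operator. Suppose that for every Lipschitz `f : X → ℝ` Gâteaux differentiable at `0`,
the composition `f ∘ T` is Fréchet differentiable at `0`. Then the same holds for
Lipschitz functions with values in any Banach space `Z`. -/
theorem scalar_case_implies_vector_case.{u}
    {X Y : Type*} [NormedAddCommGroup X] [NormedSpace ℝ X] [CompleteSpace X]
    [NormedAddCommGroup Y] [NormedSpace ℝ Y] [CompleteSpace Y]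
    (T : Y →L[ℝ] X)
    (hT : ∀ f : X → ℝ, (∃ K : NNReal, LipschitzWith K f) →
      GateauxDifferentiableAt f 0 → DifferentiableAt ℝ (f ∘ T) 0) :
    ∀ (Z : Type u) [NormedAddCommGroup Z] [NormedSpace ℝ Z] [CompleteSpace Z]
      (f : X → Z), (∃ K : NNReal, LipschitzWith K f) →
        GateauxDifferentiableAt f 0 → DifferentiableAt ℝ (f ∘ T) 0 := by
  intro Z _ _ _ f ⟨K, hK⟩ ⟨A, hA⟩
  -- the scalar test function
  set g : X → ℝ := fun x => ‖f x - f 0 - A x‖ with hg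
  have hg0 : g 0 = 0 := by simp [hg]
  -- g is Lipschitz
  have hgLip : ∃ K' : NNReal, LipschitzWith K' g := by
    refine ⟨1 * (K + ‖A‖₊), lipschitzWith_one_norm.comp
      (LipschitzWith.of_dist_le_mul fun x y => ?_)⟩
    have h1 : dist (f x) (f y) ≤ (K : ℝ) * dist x y := hK.dist_le_mul x y
    have h2 : ‖A x - A y‖ ≤ ‖A‖ * dist x y := by
      rw [← map_sub, dist_eq_norm]
      exact A.le_opNorm _
    have h3 : dist (f x - f 0 - A x) (f y - f 0 - A y) = ‖(f x - f y) - (A x - A y)‖ := by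
      rw [dist_eq_norm]; congr 1; abel
    push_cast
    rw [h3]
    calc ‖(f x - f y) - (A x - A y)‖ ≤ ‖f x - f y‖ + ‖A x - A y‖ := norm_sub_le _ _
      _ ≤ (K : ℝ) * dist x y + ‖A‖ * dist x y :=
          add_le_add (by rw [← dist_eq_norm]; exact h1) h2
      _ = ((K : ℝ) + ‖A‖) * dist x y := by ring
  -- g is Gâteaux differentiable at 0 with derivative 0
  have hgG : GateauxDifferentiableAt g 0 := by
    refine ⟨0, fun h => ?_⟩
    have key : Tendsto (fun t : ℝ => t⁻¹ • (f (t • h) - f 0 - A (t • h)))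
        (𝓝[≠] (0 : ℝ)) (𝓝 0) := by
      have h1 : Tendsto (fun t : ℝ => t⁻¹ • (f (t • h) - f 0) - A h)
          (𝓝[≠] (0 : ℝ)) (𝓝 0) := by
        have := (hA h).sub_const (A h)
        simpa using this
      refine h1.congr' ?_
      filter_upwards [self_mem_nhdsWithin] with t ht
      have ht' : (t : ℝ) ≠ 0 := ht
      simp [map_smul, smul_sub, smul_smul, inv_mul_cancel₀ ht']
    rw [tendsto_zero_iff_norm_tendsto_zero] at key
    have : Tendsto (fun t : ℝ => t⁻¹ • (g (0 + t • h) - g 0)) (𝓝[≠] (0 : ℝ)) (𝓝 0) := by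
      rw [tendsto_zero_iff_norm_tendsto_zero]
      refine key.congr fun t => ?_
      simp [hg, hg0, norm_smul, abs_of_nonneg, mul_comm]
    simpa using this
  -- apply the scalar hypothesis
  have hdiff : DifferentiableAt ℝ (g ∘ T) 0 := hT g hgLip hgG
  -- 0 is a global minimum of g ∘ T, so the derivative is 0
  have hmin : IsLocalMin (g ∘ T) 0 := by
    apply Filter.Eventually.of_forall
    intro y
    simp only [Function.comp_apply, map_zero, hg0]
    exact norm_nonneg _
  have hfd0 : fderiv ℝ (g ∘ T) 0 = 0 := hmin.fderiv_eq_zero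
  have hgT : HasFDerivAt (g ∘ T) 0 0 := hfd0 ▸ hdiff.hasFDerivAt
  -- translate to littleO
  rw [hasFDerivAt_iff_isLittleO_nhds_zero] at hgT
  have ho : (fun y : Y => g (T y)) =o[𝓝 0] (fun y : Y => y) := by
    refine hgT.congr' ?_ (Eventually.of_forall fun _ => rfl)
    filter_upwards with y
    simp [hg0]
  have ho2 : (fun y : Y => f (T y) - f 0 - A (T y)) =o[𝓝 0] (fun y : Y => y) :=
    ho.of_norm_left
  have : HasFDerivAt (f ∘ T) (A.comp T) 0 := by
    rw [hasFDerivAt_iff_isLittleO_nhds_zero]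
    refine ho2.congr' ?_ (Eventually.of_forall fun _ => rfl)
    filter_upwards with y
    simp
  exact this.differentiableAt
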